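/- arXiv:1906.03708 — 2 statements merged into one kernel-verified Lean document; each statement's English description precedes it below -/
import Mathlib

section
/- Variational gap bound via standard deviations: Let X > 0 be a random variable with E[X] = m and standard deviation σ_X, and let Y = log X have standard deviation σ_Y. If σ_X < m, then log m - E[log X] ≤ σ_X/(m - σ_X) + σ_Y. -/
open MeasureTheory ProbabilityTheory Real

/-!
By Cantelli's inequality at most half of the mass of `X` lies below `𝔼X - σ_X`, so
`𝔼X - σ_X` is at most a median of `X`. Since `log` is increasing, `log (𝔼X - σ_X)` is at most a
median of `log X`, and Cantelli's inequality once more bounds any such number by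
`𝔼[log X] + σ_Y`. The tangent line `log x ≤ x - 1` at `x = 𝔼X / (𝔼X - σ_X)` closes the gap
between `log 𝔼X` and `log (𝔼X - σ_X)`.
-/

section

variable {Ω : Type*} [MeasurableSpace Ω] {μ : Measure Ω} [IsProbabilityMeasure μ] {Z : Ω → ℝ}

lemma integral_sub_integral_add_sq_eq (hZ : MemLp Z 2 μ) (s : ℝ) :
    ∫ ω, (Z ω - μ[Z] + s) ^ 2 ∂μ = Var[Z; μ] + s ^ 2 := by
  have hW : MemLp (fun ω ↦ Z ω - μ[Z] + s) 2 μ := (hZ.sub (memLp_const _)).add (memLp_const _)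
  have hmean : μ[fun ω ↦ Z ω - μ[Z] + s] = s := by
    have hZi := hZ.integrable one_le_two
    rw [integral_add (f := fun ω ↦ Z ω - μ[Z]) (hZi.sub (integrable_const _))
      (integrable_const _), integral_sub hZi (integrable_const _)]
    simp
  have hvar : Var[fun ω ↦ Z ω - μ[Z] + s; μ] = Var[Z; μ] := by
    rw [variance_add_const (X := fun ω ↦ Z ω - μ[Z]) (hZ.1.sub aestronglyMeasurable_const),
      variance_sub_const hZ.1]
  have := variance_eq_sub hW
  rw [hvar, hmean] at this
  simp only [Pi.pow_apply] at this
  linarith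

/-- Markov's inequality for `(Z - 𝔼Z + s)²`. -/
lemma measureReal_integral_add_le_mul_sq_le (hZ : MemLp Z 2 μ) {s t : ℝ} (hs : 0 ≤ s)
    (ht : 0 ≤ t) :
    μ.real {ω | μ[Z] + t ≤ Z ω} * (t + s) ^ 2 ≤ Var[Z; μ] + s ^ 2 := by
  have hsq : Integrable (fun ω ↦ (Z ω - μ[Z] + s) ^ 2) μ :=
    ((hZ.sub (memLp_const _)).add (memLp_const _)).integrable_sq
  have markov := mul_meas_ge_le_integral_of_nonneg (.of_forall fun _ ↦ sq_nonneg _) hsq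
    ((t + s) ^ 2)
  rw [integral_sub_integral_add_sq_eq hZ] at markov
  have hsub : {ω | μ[Z] + t ≤ Z ω} ⊆ {ω | (t + s) ^ 2 ≤ (Z ω - μ[Z] + s) ^ 2} :=
    fun ω (hω : μ[Z] + t ≤ Z ω) ↦ show (t + s) ^ 2 ≤ (Z ω - μ[Z] + s) ^ 2 from
      pow_le_pow_left₀ (by linarith) (by linarith) 2
  calc μ.real {ω | μ[Z] + t ≤ Z ω} * (t + s) ^ 2
      ≤ (t + s) ^ 2 * μ.real {ω | (t + s) ^ 2 ≤ (Z ω - μ[Z] + s) ^ 2} := by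
        rw [mul_comm]; exact mul_le_mul_of_nonneg_left (measureReal_mono hsub) (sq_nonneg _)
    _ ≤ Var[Z; μ] + s ^ 2 := markov

/-- Cantelli's one-sided Chebyshev inequality. -/
theorem measureReal_integral_add_le_le_variance_div (hZ : MemLp Z 2 μ) {t : ℝ} (ht : 0 < t) :
    μ.real {ω | μ[Z] + t ≤ Z ω} ≤ Var[Z; μ] / (Var[Z; μ] + t ^ 2) := by
  set v := Var[Z; μ]
  have hv : 0 ≤ v := variance_nonneg Z μ
  -- the optimal shift in Markov's inequality
  have h := measureReal_integral_add_le_mul_sq_le hZ (div_nonneg hv ht.le) ht.le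
  have key : v + (v / t) ^ 2 = v / (v + t ^ 2) * (t + v / t) ^ 2 := by
    field_simp; ring
  rw [key] at h
  exact le_of_mul_le_mul_right h (by positivity)

lemma measureReal_lt_integral_sub_sqrt_variance_le_half (hZ : MemLp Z 2 μ) :
    μ.real {ω | Z ω < μ[Z] - √Var[Z; μ]} ≤ 1 / 2 := by
  rcases (variance_nonneg Z μ).eq_or_lt with hv | hv
  · have hnull : μ {ω | Z ω < μ[Z] - √Var[Z; μ]} = 0 := by
      rw [← hv, sqrt_zero, sub_zero]
      refine measure_eq_zero_iff_ae_notMem.2 ?_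
      filter_upwards [ae_eq_integral_of_variance_eq_zero hZ hv.symm] with ω hω
      simp [hω]
    simp [Measure.real, hnull]
  · have h := measureReal_integral_add_le_le_variance_div hZ.neg (sqrt_pos.2 hv)
    rw [variance_neg, sq_sqrt hv.le, ← two_mul, div_mul_cancel_right₀ hv.ne'] at h
    simp only [Pi.neg_apply, integral_neg] at h
    calc μ.real {ω | Z ω < μ[Z] - √Var[Z; μ]}
        ≤ μ.real {ω | -μ[Z] + √Var[Z; μ] ≤ -Z ω} :=
          measureReal_mono fun ω (hω : Z ω < μ[Z] - √Var[Z; μ]) ↦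
            show -μ[Z] + √Var[Z; μ] ≤ -Z ω by linarith
      _ ≤ 1 / 2 := by simpa using h

lemma le_integral_add_sqrt_variance_of_measureReal_lt_le_half (hZ : MemLp Z 2 μ) {c : ℝ}
    (hc : μ.real {ω | Z ω < c} ≤ 1 / 2) : c ≤ μ[Z] + √Var[Z; μ] := by
  by_contra! h
  set v := Var[Z; μ]
  have ht : √v < c - μ[Z] := by linarith
  have htv : v < (c - μ[Z]) ^ 2 := lt_sq_of_sqrt_lt ht
  have hcantelli := measureReal_integral_add_le_le_variance_div hZ ((sqrt_nonneg v).trans_lt ht)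
  rw [add_sub_cancel] at hcantelli
  have hsplit : 1 ≤ μ.real {ω | Z ω < c} + μ.real {ω | c ≤ Z ω} := by
    have := measureReal_union_le (μ := μ) {ω | Z ω < c} {ω | c ≤ Z ω}
    rwa [show {ω | Z ω < c} ∪ {ω | c ≤ Z ω} = Set.univ by ext; simp [lt_or_ge],
      probReal_univ] at this
  have : v / (v + (c - μ[Z]) ^ 2) < 1 / 2 := by
    rw [div_lt_iff₀ (by linarith [variance_nonneg Z μ])]; linarith
  linarith

end

lemma Real.log_sub_log_le_sub_div {a b : ℝ} (ha : 0 < a) (hb : 0 < b) :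
    log a - log b ≤ (a - b) / b := by
  rw [← log_div ha.ne' hb.ne', sub_div, div_self hb.ne']
  exact log_le_sub_one_of_pos (div_pos ha hb)

/-- Corollary: variational gap bound via standard deviations. If `σ_X < E[X] = m`,
then `log m - E[log X] ≤ σ_X/(m - σ_X) + σ_Y` where `Y = log X`. -/
theorem variational_gap_stddev_bound {Ω : Type*} [MeasurableSpace Ω] (μ : Measure Ω)
    [IsProbabilityMeasure μ] (X : Ω → ℝ) (hXpos : ∀ᵐ ω ∂μ, 0 < X ω)
    (hX : MemLp X 2 μ) (hY : MemLp (fun ω => Real.log (X ω)) 2 μ)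
    (hσ : Real.sqrt (variance X μ) < ∫ ω, X ω ∂μ) :
    Real.log (∫ ω, X ω ∂μ) - ∫ ω, Real.log (X ω) ∂μ ≤
      Real.sqrt (variance X μ) / ((∫ ω, X ω ∂μ) - Real.sqrt (variance X μ)) +
      Real.sqrt (variance (fun ω => Real.log (X ω)) μ) := by
  set m := ∫ ω, X ω ∂μ
  set σ := √(variance X μ)
  have hmσ : 0 < m - σ := by linarith
  have hlog : {ω | log (X ω) < log (m - σ)} =ᵐ[μ] {ω | X ω < m - σ} := by
    filter_upwards [hXpos] with ω hω
    exact propext (log_lt_log_iff hω hmσ)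
  have hmedian : log (m - σ) ≤ ∫ ω, log (X ω) ∂μ + √(variance (fun ω ↦ log (X ω)) μ) :=
    le_integral_add_sqrt_variance_of_measureReal_lt_le_half hY <| by
      rw [measureReal_congr hlog]
      exact measureReal_lt_integral_sub_sqrt_variance_le_half hX
  have htangent := log_sub_log_le_sub_div (hmσ.trans_le (sub_le_self m (sqrt_nonneg _))) hmσ
  rw [sub_sub_cancel] at htangent
  linarith
end

section
/- Monotonicity of the importance weighted lower bound: for i.i.d. positive integrable random variables W_1, W_2, ..., and L_K := E[log((W_1 + ... + W_K)/K)], one has L_M ≥ L_N whenever M ≥ N. -/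
/-!
The `(K+1)`-sample mean is the average of its `K+1` leave-one-out `K`-sample means, so by
concavity of `log` its logarithm dominates the average of their logarithms. By exchangeability
of i.i.d. weights, every leave-one-out mean has the law of the first `K`-sample mean; taking
expectations gives `L K ≤ L (K+1)`, and monotonicity follows by induction.
-/

open MeasureTheory ProbabilityTheory Real Finset

section Exchangeable

variable {Ω ι β : Type*} [MeasurableSpace Ω] {μ : Measure Ω} [MeasurableSpace β]
  {W : ι → Ω → β}

theorem ProbabilityTheory.iIndepFun.identDistrib_comp_of_injective (hindep : iIndepFun W μ)
    (hmeas : ∀ i, Measurable (W i)) (hident : ∀ i j, IdentDistrib (W i) (W j) μ μ) {k : ℕ}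
    {g g' : Fin k → ι} (hg : g.Injective) (hg' : g'.Injective) :
    IdentDistrib (fun ω i ↦ W (g i) ω) (fun ω i ↦ W (g' i) ω) μ μ where
  aemeasurable_fst := (measurable_pi_lambda _ fun i ↦ hmeas (g i)).aemeasurable
  aemeasurable_snd := (measurable_pi_lambda _ fun i ↦ hmeas (g' i)).aemeasurable
  map_eq := by
    rw [(hindep.precomp hg).map_fun_eq_pi_map fun i ↦ (hmeas _).aemeasurable,
      (hindep.precomp hg').map_fun_eq_pi_map fun i ↦ (hmeas _).aemeasurable]
    exact congrArg Measure.pi (funext fun i ↦ (hident _ _).map_eq)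

theorem ProbabilityTheory.iIndepFun.identDistrib_sum_of_card_eq [AddCommMonoid β]
    [MeasurableAdd₂ β] (hindep : iIndepFun W μ) (hmeas : ∀ i, Measurable (W i))
    (hident : ∀ i j, IdentDistrib (W i) (W j) μ μ) {s t : Finset ι} (hst : s.card = t.card) :
    IdentDistrib (fun ω ↦ ∑ j ∈ s, W j ω) (fun ω ↦ ∑ j ∈ t, W j ω) μ μ := by
  have sum_eq {k : ℕ} (u : Finset ι) (hu : u.card = k) :
      (fun ω ↦ ∑ j ∈ u, W j ω) =
        (fun x : Fin k → β ↦ ∑ i, x i) ∘ fun ω i ↦ W ((u.equivFinOfCardEq hu).symm i) ω := by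
    funext ω
    rw [← sum_coe_sort u]
    exact (Fintype.sum_equiv (u.equivFinOfCardEq hu) _ _ fun _ ↦ by simp)
  rw [sum_eq s hst, sum_eq t rfl]
  exact (hindep.identDistrib_comp_of_injective hmeas hident
    (Subtype.val_injective.comp (s.equivFinOfCardEq hst).symm.injective)
    (Subtype.val_injective.comp (t.equivFinOfCardEq rfl).symm.injective)).comp
    (by fun_prop)

end Exchangeable

theorem average_mean_erase_eq_mean {ι : Type*} [DecidableEq ι] (s : Finset ι) {n : ℕ}
    (hs : s.card = n + 1) (hn : n ≠ 0) (x : ι → ℝ) :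
    ∑ i ∈ s, (n + 1 : ℝ)⁻¹ * ((∑ j ∈ s.erase i, x j) / n) = (∑ j ∈ s, x j) / (n + 1) := by
  have hn' : (n : ℝ) ≠ 0 := Nat.cast_ne_zero.mpr hn
  rw [← mul_sum, ← sum_div, sum_congr rfl fun i hi ↦ sum_erase_eq_sub hi, sum_sub_distrib,
    sum_const, hs, nsmul_eq_mul]
  push_cast
  field_simp
  ring

theorem average_log_mean_erase_le_log_mean {ι : Type*} [DecidableEq ι] (s : Finset ι) {n : ℕ}
    (hs : s.card = n + 1) (hn : n ≠ 0) {x : ι → ℝ} (hx : ∀ i ∈ s, 0 < x i) :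
    (n + 1 : ℝ)⁻¹ * ∑ i ∈ s, log ((∑ j ∈ s.erase i, x j) / n) ≤
      log ((∑ j ∈ s, x j) / (n + 1)) := by
  have mean_pos (i) (hi : i ∈ s) : (∑ j ∈ s.erase i, x j) / n ∈ Set.Ioi 0 := by
    have : (s.erase i).Nonempty := by
      rw [← card_pos, card_erase_of_mem hi]; omega
    exact div_pos (sum_pos (fun j hj ↦ hx j (mem_of_mem_erase hj)) this) (by positivity)
  rw [mul_sum, ← average_mean_erase_eq_mean s hs hn]
  exact strictConcaveOn_log_Ioi.concaveOn.le_map_sum (fun _ _ ↦ by positivity)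
    (by rw [sum_const, hs, nsmul_eq_mul]; push_cast; field_simp) mean_pos

section IWBound

variable {Ω : Type*} [MeasurableSpace Ω]

noncomputable def iwBound (μ : Measure Ω) (W : ℕ → Ω → ℝ)
    (K : ℕ) : ℝ :=
  ∫ ω, log ((∑ j ∈ range K, W j ω) / K) ∂μ

theorem iwBound_le_succ {μ : Measure Ω} {W : ℕ → Ω → ℝ}
    (hmeas : ∀ j, Measurable (W j)) (hpos : ∀ j, ∀ᵐ ω ∂μ, 0 < W j ω) (hindep : iIndepFun W μ)
    (hident : ∀ i j, IdentDistrib (W i) (W j) μ μ) {K : ℕ} (hK : K ≠ 0)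
    (hint : Integrable (fun ω ↦ log ((∑ j ∈ range K, W j ω) / K)) μ)
    (hint' : Integrable (fun ω ↦ log ((∑ j ∈ range (K + 1), W j ω) / (K + 1 : ℕ))) μ) :
    iwBound μ W K ≤ iwBound μ W (K + 1) := by
  set f : ℕ → Ω → ℝ := fun i ω ↦ log ((∑ j ∈ (range (K + 1)).erase i, W j ω) / K)
  have f_ident (i) (hi : i ∈ range (K + 1)) :
      IdentDistrib (f i) (fun ω ↦ log ((∑ j ∈ range K, W j ω) / K)) μ μ :=
    (hindep.identDistrib_sum_of_card_eq hmeas hident (by simp [card_erase_of_mem hi])).comp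
      (u := fun x ↦ log (x / K)) (by fun_prop)
  have f_int (i) (hi : i ∈ range (K + 1)) : Integrable (f i) μ :=
    (f_ident i hi).integrable_iff.mpr hint
  have integral_average : ∫ ω, (K + 1 : ℝ)⁻¹ * ∑ i ∈ range (K + 1), f i ω ∂μ = iwBound μ W K := by
    rw [integral_const_mul, integral_finsetSum _ f_int,
      sum_congr rfl fun i hi ↦ (f_ident i hi).integral_eq, sum_const, card_range, nsmul_eq_mul]
    push_cast
    field_simp
    rfl
  rw [← integral_average]
  refine integral_mono_ae ((integrable_finsetSum _ f_int).const_mul _) hint' ?_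
  filter_upwards [ae_all_iff.mpr hpos] with ω hω
  push_cast
  exact average_log_mean_erase_le_log_mean _ (card_range _) hK fun i _ ↦ hω i

end IWBound

theorem iwlb_monotone_general {Ω : Type*} [MeasurableSpace Ω] (μ : Measure Ω)
    (W : ℕ → Ω → ℝ)
    (hmeas : ∀ j, Measurable (W j))
    (hpos : ∀ j, ∀ᵐ ω ∂μ, 0 < W j ω)
    (hindep : iIndepFun W μ)
    (hident : ∀ j, IdentDistrib (W j) (W 0) μ μ)
    (hlogint : ∀ K, 1 ≤ K →
      Integrable (fun ω => Real.log ((∑ j ∈ Finset.range K, W j ω) / K)) μ)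
    (M N : ℕ) (hN : 1 ≤ N) (hMN : N ≤ M) :
    ∫ ω, Real.log ((∑ j ∈ Finset.range N, W j ω) / N) ∂μ ≤
    ∫ ω, Real.log ((∑ j ∈ Finset.range M, W j ω) / M) ∂μ := by
  have hident' (i j : ℕ) : IdentDistrib (W i) (W j) μ μ := (hident i).trans (hident j).symm
  induction M, hMN using Nat.le_induction with
  | base => exact le_rfl
  | succ K hNK ih =>
    exact ih.trans <| iwBound_le_succ hmeas hpos hindep hident' (by omega)
      (hlogint K (by omega)) (hlogint (K + 1) (by omega))

/-- Monotonicity of the importance weighted lower bound: for i.i.d. positive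
integrable `W j`, `L K := E[log((W 1 + ... + W K)/K)]` is monotone in `K`. -/
theorem iwlb_monotone {Ω : Type*} [MeasurableSpace Ω] (μ : Measure Ω)
    [IsProbabilityMeasure μ] (W : ℕ → Ω → ℝ)
    (hmeas : ∀ j, Measurable (W j))
    (hpos : ∀ j, ∀ᵐ ω ∂μ, 0 < W j ω)
    (hint : ∀ j, Integrable (W j) μ)
    (hindep : iIndepFun W μ)
    (hident : ∀ j, IdentDistrib (W j) (W 0) μ μ)
    (hlogint : ∀ K, 1 ≤ K →
      Integrable (fun ω => Real.log ((∑ j ∈ Finset.range K, W j ω) / K)) μ)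
    (M N : ℕ) (hN : 1 ≤ N) (hMN : N ≤ M) :
    ∫ ω, Real.log ((∑ j ∈ Finset.range N, W j ω) / N) ∂μ ≤
    ∫ ω, Real.log ((∑ j ∈ Finset.range M, W j ω) / M) ∂μ :=
  iwlb_monotone_general μ W hmeas hpos hindep hident hlogint M N hN hMN
end
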